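/- The Souslin scheme S with S(a) := {p : ℕ → ℕ | a is an initial segment of p} is an open, complete, covering Souslin scheme on the space (ℕ → ℕ, σ_𝕊), where σ_𝕊 is the topology generated by the base { cut(S,p,n) ∪ {p} : p : ℕ → ℕ, n ∈ ℕ }. -/
import Mathlib


open Set Filter Topology TopologicalSpace Function

noncomputable section

/-- The Sorgenfrey topology on `ℝ`: generated by half-open intervals `[a, b)`. -/
def sorgenfreyTop : TopologicalSpace ℝ :=
  TopologicalSpace.generateFrom {s : Set ℝ | ∃ a b : ℝ, s = Set.Ico a b}

/-- The initial segment `p↾n` of an infinite sequence, as a list. -/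
def restr (p : ℕ → ℕ) (n : ℕ) : List ℕ := (List.range n).map p

/-- `fruit V p = ⋂ n, V (p↾n)`. -/
def fruit {X : Type*} (V : List ℕ → Set X) (p : ℕ → ℕ) : Set X := ⋂ n, V (restr p n)

/-- A Souslin scheme is covering if `V ⟨⟩ = X` and `V a = ⋃ n, V (a ⌢ n)`. -/
def Covering {X : Type*} (V : List ℕ → Set X) : Prop :=
  V [] = Set.univ ∧ ∀ a : List ℕ, V a = ⋃ n : ℕ, V (a ++ [n])

/-- A Souslin scheme is complete if every fruit is nonempty. -/
def CompleteScheme {X : Type*} (V : List ℕ → Set X) : Prop :=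
  ∀ q : ℕ → ℕ, (fruit V q).Nonempty

/-- A Souslin scheme has strict branches if every fruit is a singleton. -/
def StrictBranches {X : Type*} (V : List ℕ → Set X) : Prop :=
  ∀ q : ℕ → ℕ, ∃ x : X, fruit V q = {x}

/-- A Souslin scheme is locally strict. -/
def LocallyStrict {X : Type*} (V : List ℕ → Set X) : Prop :=
  (∀ a : List ℕ, V a = ⋃ n : ℕ, V (a ++ [n])) ∧
  ∀ a : List ℕ, ∀ m k : ℕ, m ≠ k → V (a ++ [m]) ∩ V (a ++ [k]) = ∅

/-- `q ◁ p` for infinite sequences: `q↾n = p↾n` and `q n < p n` for some `n`. -/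
def tri (q p : ℕ → ℕ) : Prop := ∃ n : ℕ, restr q n = restr p n ∧ q n < p n

/-- `q ⊴ p` for infinite sequences. -/
def trieq (q p : ℕ → ℕ) : Prop := tri q p ∨ q = p

/-- `q ◁ s` where `q` is an infinite sequence and `s` a finite one. -/
def triL (q : ℕ → ℕ) (s : List ℕ) : Prop :=
  ∃ n : ℕ, ∃ h : n < s.length, restr q n = s.take n ∧ q n < s.get ⟨n, h⟩

/-- `rsequences(q, n) = {p | q ◁ p ∧ q↾n = p↾n}`. -/
def rsequences (q : ℕ → ℕ) (n : ℕ) : Set (ℕ → ℕ) :=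
  {p | tri q p ∧ restr q n = restr p n}

/-- `rsubtree(q, n)`: finite sequences `s` such that `q↾n ⊏ s` and `q ◁ s`. -/
def rsubtree (q : ℕ → ℕ) (n : ℕ) : Set (List ℕ) :=
  {s | restr q n <+: s ∧ restr q n ≠ s ∧ triL q s}

/-- `cut(V, q, n) = ⋃ {fruit(V, p) : p ∈ rsequences(q, n)}`. -/
def cut {X : Type*} (V : List ℕ → Set X) (q : ℕ → ℕ) (n : ℕ) : Set X :=
  ⋃ p ∈ rsequences q n, fruit V p

/-- `branches(V, x) = {q | x ∈ fruit(V, q)}`. -/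
def branches {X : Type*} (V : List ℕ → Set X) (x : X) : Set (ℕ → ℕ) :=
  {q | x ∈ fruit V q}

/-- `q` is a `τ`-base branch of `x` in `V`: `q ∈ branches(V, x)` and
`{cut(V, q, m) ∪ {x} : m ∈ ℕ}` is a neighborhood base of open sets at `x`. -/
def IsBaseBranch {X : Type*} (τ : TopologicalSpace X) (V : List ℕ → Set X)
    (q : ℕ → ℕ) (x : X) : Prop :=
  x ∈ fruit V q ∧ (∀ m : ℕ, IsOpen[τ] (cut V q m ∪ {x})) ∧
    (@nhds X τ x).HasBasis (fun _ : ℕ => True) (fun m : ℕ => cut V q m ∪ {x})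

/-- `BB(V, x, τ)`: the set of `τ`-base branches of `x` in `V`. -/
def BB {X : Type*} (τ : TopologicalSpace X) (V : List ℕ → Set X) (x : X) : Set (ℕ → ℕ) :=
  {q | IsBaseBranch τ V q x}

/-- A Sorgenfrey base for a space: an open complete covering Souslin scheme
satisfying (S1) and (S2). -/
def IsSorgenfreyBase {X : Type*} (τ : TopologicalSpace X) (V : List ℕ → Set X) : Prop :=
  (∀ a : List ℕ, IsOpen[τ] (V a)) ∧ CompleteScheme V ∧ Covering V ∧
  (∀ x : X, ∀ q ∈ branches V x, ∀ n : ℕ, ∃ t ∈ BB τ V x, restr t n = restr q n) ∧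
  (∀ q : ℕ → ℕ, ∃ z : X, q ∈ BB τ V z)

/-- The Souslin scheme `S` on the Baire set: `S a = {p | a ⊑ p}`. -/
def SchemeS (a : List ℕ) : Set (ℕ → ℕ) := {p | restr p a.length = a}

/-- The topology `σ_𝕊` on `ℕ → ℕ` generated by the base
`{cut(S, p, n) ∪ {p} : p ∈ ℕ → ℕ, n ∈ ℕ}`. -/
def sigmaS : TopologicalSpace (ℕ → ℕ) :=
  TopologicalSpace.generateFrom
    {U : Set (ℕ → ℕ) | ∃ p : ℕ → ℕ, ∃ n : ℕ, U = cut SchemeS p n ∪ {p}}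

lemma restr_succ (p : ℕ → ℕ) (n : ℕ) : restr p (n + 1) = restr p n ++ [p n] := by
  simp [restr, List.range_succ]

lemma restr_length (p : ℕ → ℕ) (n : ℕ) : (restr p n).length = n := by
  simp [restr]

lemma eq_of_forall_restr {x q : ℕ → ℕ} (h : ∀ n, restr x n = restr q n) : x = q := by
  funext m
  have h1 := h (m + 1)
  rw [restr_succ, restr_succ, h m] at h1
  simpa using List.append_inj_right h1 rfl

lemma fruit_SchemeS (q : ℕ → ℕ) : fruit SchemeS q = {q} := by
  ext x
  simp only [fruit, SchemeS, Set.mem_iInter, Set.mem_setOf_eq, Set.mem_singleton_iff,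
    restr_length]
  constructor
  · intro h; exact eq_of_forall_restr h
  · rintro rfl n; rfl

/-- `S` is an open complete covering Souslin scheme on `(ℕ → ℕ, σ_𝕊)`. -/
theorem stmt2 :
    (∀ a : List ℕ, IsOpen[sigmaS] (SchemeS a)) ∧
    CompleteScheme SchemeS ∧ Covering SchemeS := by
  refine ⟨?_, ?_, ?_, ?_⟩
  · -- open
    intro a
    have key : SchemeS a = ⋃ p ∈ SchemeS a, (cut SchemeS p a.length ∪ {p}) := by
      ext q
      simp only [Set.mem_iUnion, Set.mem_union, Set.mem_singleton_iff]
      constructor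
      · intro hq; exact ⟨q, hq, Or.inr rfl⟩
      · rintro ⟨p, hp, hq | rfl⟩
        · obtain ⟨r, hr, hqr⟩ := by simpa [cut] using hq
          rw [fruit_SchemeS, Set.mem_singleton_iff] at hqr
          subst hqr
          show restr q a.length = a
          rw [← hr.2]; exact hp
        · exact hp
    rw [key, ← Set.sUnion_image]
    apply TopologicalSpace.GenerateOpen.sUnion
    rintro t ⟨p, -, rfl⟩
    exact TopologicalSpace.GenerateOpen.basic _ ⟨p, a.length, rfl⟩
  · -- complete
    intro q
    exact ⟨q, by rw [fruit_SchemeS]; rfl⟩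
  · ext p; simp [SchemeS, restr]
  · intro a
    ext p
    simp only [SchemeS, Set.mem_setOf_eq, Set.mem_iUnion]
    constructor
    · intro h
      refine ⟨p a.length, ?_⟩
      simp [restr_succ, h]
    · rintro ⟨n, h⟩
      rw [List.length_append, List.length_singleton, restr_succ] at h
      exact (List.append_inj h (by simp [restr_length])).1
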